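/- arXiv:2410.24195 — 3 statements merged into one kernel-verified Lean document; each statement's English description precedes it below -/
import Mathlib

section
/- For all sufficiently large n, for every unit vector v in R^n, there exists α₀ in the finite set A = {(log n)^{-1/2}, (log n)^{-1}, ..., (log n)^{-(⌈L⌉-1)/2}, (log n)^{-L/2}} with L = log(2n)/log log n such that 1/α₀² ≥ |{i : |v_i| ≥ α₀}| > 1/(α₀² (log n)²). -/
/-!
Write `w = log n` and run through the grid from the top, `α_ℓ = w^(-ℓ/2)`. If the lower bound
`N(α) > 1/(α² w²)` failed at every grid point, then the squared mass of `v` in each shell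
`α_{ℓ+1} ≤ |v i| < α_ℓ` would be at most `N(α_{ℓ+1}) α_ℓ² ≤ 1/w`, and likewise above `α_1`.
With fewer than `⌈L⌉ < w/2` shells this is less than `1/2`, while the coordinates below the
last grid point `w^(-L/2) = (2n)^(-1/2)` carry at most `n/(2n) = 1/2`: together less than
`‖v‖² = 1`. The upper bound `N(α) ≤ 1/α²` is Chebyshev's inequality.
-/

open Finset Real

section Thresholds

variable {ι : Type*} (v : ι → ℝ)

theorem sum_sq_filter_abs_lt_le (s : Finset ι) (a : ℝ) :
    ∑ i ∈ s with |v i| < a, v i ^ 2 ≤ #s * a ^ 2 := by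
  calc ∑ i ∈ s with |v i| < a, v i ^ 2 ≤ #{i ∈ s | |v i| < a} • a ^ 2 := by
        refine sum_le_card_nsmul _ _ _ fun i hi => ?_
        rw [← sq_abs]
        exact pow_le_pow_left₀ (abs_nonneg _) (mem_filter.1 hi).2.le 2
    _ ≤ #s * a ^ 2 := by
        rw [nsmul_eq_mul]
        gcongr
        exact filter_subset _ _

variable [Fintype ι]

theorem card_filter_le_abs_le_sum_sq_div {t : ℝ} (ht : 0 < t) :
    (#{i | t ≤ |v i|} : ℝ) ≤ (∑ i, v i ^ 2) / t ^ 2 := by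
  rw [le_div_iff₀ (by positivity), ← nsmul_eq_mul]
  calc #{i | t ≤ |v i|} • t ^ 2 ≤ ∑ i with t ≤ |v i|, v i ^ 2 := by
        refine card_nsmul_le_sum _ _ _ fun i hi => ?_
        simpa using pow_le_pow_left₀ ht.le (mem_filter.1 hi).2 2
    _ ≤ ∑ i, v i ^ 2 :=
        sum_le_sum_of_subset_of_nonneg (filter_subset _ _) fun i _ _ => sq_nonneg _

theorem sum_sq_filter_le_abs_le_telescope {t : ℕ → ℝ} (ht : Antitone t) (m : ℕ) :
    ∑ i with t m ≤ |v i|, v i ^ 2 ≤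
      ∑ i with t 0 ≤ |v i|, v i ^ 2 + ∑ j ∈ range m, #{i | t (j + 1) ≤ |v i|} * t j ^ 2 := by
  induction m with
  | zero => simp
  | succ m ih =>
    have hsplit : ∑ i with t (m + 1) ≤ |v i|, v i ^ 2 =
        ∑ i ∈ {i | t (m + 1) ≤ |v i|} with |v i| < t m, v i ^ 2 +
          ∑ i with t m ≤ |v i|, v i ^ 2 := by
      rw [← sum_filter_add_sum_filter_not _ (fun i => |v i| < t m), filter_filter]
      congr 2
      ext i
      simp only [mem_filter, mem_univ, true_and, not_lt]
      exact ⟨fun h => h.2, fun h => ⟨(ht m.le_succ).trans h, h⟩⟩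
    rw [hsplit, sum_range_succ]
    have hshell := sum_sq_filter_abs_lt_le v {i | t (m + 1) ≤ |v i|} (t m)
    linarith

theorem exists_lt_card_filter_le_abs (hv : ∑ i, v i ^ 2 = 1) {t : ℕ → ℝ} (ht_pos : ∀ j, 0 < t j)
    (ht : Antitone t) {w : ℝ} (hw : 0 < w) (htop : 1 ≤ w * t 0 ^ 2)
    (hstep : ∀ j, t j ^ 2 ≤ w * t (j + 1) ^ 2) {m : ℕ}
    (hsmall : 2 * Fintype.card ι * t m ^ 2 ≤ 1) (hm : 2 * ((m : ℝ) + 1) < w) :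
    ∃ j ≤ m, 1 / (t j ^ 2 * w ^ 2) < #{i | t j ≤ |v i|} := by
  by_contra! hN
  have hN' : ∀ j ≤ m, #{i | t j ≤ |v i|} * (w * t j ^ 2) ≤ 1 / w := fun j hj => by
    have := mul_le_mul_of_nonneg_right (hN j hj) (by positivity : 0 ≤ w * t j ^ 2)
    have ht0 := (ht_pos j).ne'
    rwa [show 1 / (t j ^ 2 * w ^ 2) * (w * t j ^ 2) = 1 / w by field_simp] at this
  have htop_sum : ∑ i with t 0 ≤ |v i|, v i ^ 2 ≤ 1 / w :=
    calc ∑ i with t 0 ≤ |v i|, v i ^ 2 ≤ ∑ i with t 0 ≤ |v i|, (1 : ℝ) :=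
          sum_le_sum fun i _ => hv ▸ single_le_sum (fun j _ => sq_nonneg (v j)) (mem_univ i)
      _ = #{i | t 0 ≤ |v i|} := by simp
      _ ≤ #{i | t 0 ≤ |v i|} * (w * t 0 ^ 2) := le_mul_of_one_le_right (by positivity) htop
      _ ≤ 1 / w := hN' 0 m.zero_le
  have hshells : ∑ j ∈ range m, #{i | t (j + 1) ≤ |v i|} * t j ^ 2 ≤ m * (1 / w) := by
    calc ∑ j ∈ range m, (#{i | t (j + 1) ≤ |v i|} : ℝ) * t j ^ 2 ≤ ∑ j ∈ range m, 1 / w := by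
          refine sum_le_sum fun j hj => ?_
          calc (#{i | t (j + 1) ≤ |v i|} : ℝ) * t j ^ 2
              ≤ #{i | t (j + 1) ≤ |v i|} * (w * t (j + 1) ^ 2) := by gcongr; exact hstep j
            _ ≤ 1 / w := hN' (j + 1) (mem_range.1 hj)
      _ = m * (1 / w) := by simp
  have hlow : ∑ i with |v i| < t m, v i ^ 2 ≤ Fintype.card ι * t m ^ 2 :=
    sum_sq_filter_abs_lt_le v univ (t m)
  have hsplit := sum_filter_add_sum_filter_not univ (fun i => |v i| < t m) fun i => v i ^ 2
  simp only [not_lt] at hsplit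
  have htel := sum_sq_filter_le_abs_le_telescope v ht m
  have hmw : ((m : ℝ) + 1) / w < 1 / 2 := by rw [div_lt_iff₀ hw]; linarith
  have hshells_top : (m : ℝ) * (1 / w) + 1 / w = ((m : ℝ) + 1) / w := by ring
  linarith

end Thresholds

section Grid

/-- The `j`-th point of the grid, from the top: `w^(-(j+1)/2)` while `j + 1 < L`, and the last
point `w^(-L/2)` from then on. -/
noncomputable def gridScale (w L : ℝ) (j : ℕ) : ℝ :=
  w ^ (-min ((j : ℝ) + 1) L / 2)

variable {w : ℝ} (L : ℝ)

theorem gridScale_pos (hw : 0 < w) (j : ℕ) : 0 < gridScale w L j :=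
  rpow_pos_of_pos hw _

theorem sq_gridScale (hw : 0 ≤ w) (j : ℕ) :
    gridScale w L j ^ 2 = w ^ (-min ((j : ℝ) + 1) L) := by
  rw [gridScale, ← rpow_mul_natCast hw]
  ring_nf

theorem gridScale_antitone (hw : 1 ≤ w) : Antitone (gridScale w L) := fun i j hij => by
  refine rpow_le_rpow_of_exponent_le hw ?_
  have hij' : (i : ℝ) ≤ j := by exact_mod_cast hij
  have := min_le_min_right L (add_le_add_left hij' 1)
  linarith

theorem one_le_mul_sq_gridScale_zero (hw : 1 ≤ w) : 1 ≤ w * gridScale w L 0 ^ 2 := by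
  calc 1 ≤ w ^ (1 + -min ((0 : ℕ) + 1 : ℝ) L) := one_le_rpow hw (by simp)
    _ = w * gridScale w L 0 ^ 2 := by
        rw [rpow_add (by linarith), rpow_one, sq_gridScale L (by linarith)]

theorem sq_gridScale_le_mul_sq_gridScale_succ (hw : 1 ≤ w) (j : ℕ) :
    gridScale w L j ^ 2 ≤ w * gridScale w L (j + 1) ^ 2 := by
  rw [sq_gridScale L (by linarith), sq_gridScale L (by linarith)]
  calc w ^ (-min ((j : ℝ) + 1) L) ≤ w ^ (1 + -min (((j + 1 : ℕ) : ℝ) + 1) L) := by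
        refine rpow_le_rpow_of_exponent_le hw ?_
        push_cast
        rcases min_cases ((j : ℝ) + 1) L with h | h <;>
          rcases min_cases ((j : ℝ) + 1 + 1) L with h' | h' <;> linarith
    _ = w * w ^ (-min (((j + 1 : ℕ) : ℝ) + 1) L) := by rw [rpow_add (by linarith), rpow_one]

theorem gridScale_of_le {j : ℕ} (h : L ≤ j + 1) : gridScale w L j = w ^ (-L / 2) := by
  rw [gridScale, min_eq_right h]

theorem gridScale_mem_grid (j : ℕ) :
    (∃ ℓ : ℕ, 1 ≤ ℓ ∧ ℓ ≤ ⌈L⌉₊ - 1 ∧ gridScale w L j = w ^ (-(ℓ : ℝ) / 2)) ∨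
      gridScale w L j = w ^ (-L / 2) := by
  by_cases h : j + 1 < ⌈L⌉₊
  · refine .inl ⟨j + 1, by omega, by omega, ?_⟩
    rw [gridScale, min_eq_left (by exact_mod_cast (Nat.lt_ceil.1 h).le)]
    push_cast
    rfl
  · exact .inr (gridScale_of_le L (by exact_mod_cast Nat.ceil_le.1 (not_lt.1 h)))

end Grid

theorem two_mul_ceil_lt_log {x : ℝ} (hx : exp (exp 3) ≤ x) :
    2 * (⌈log (2 * x) / log (log x)⌉₊ : ℝ) < log x := by
  have hw : exp 3 ≤ log x := (le_log_iff_exp_le ((exp_pos _).trans_le hx)).2 hx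
  have h3 : 3 ≤ log (log x) := (le_log_iff_exp_le ((exp_pos 3).trans_le hw)).2 hw
  have hx1 : 1 ≤ x := (one_le_exp (exp_pos 3).le).trans hx
  have h8 : 8 ≤ exp 3 :=
    calc (8 : ℝ) = 2 ^ 3 := by norm_num
      _ ≤ exp 1 ^ 3 := by gcongr; linarith [add_one_le_exp 1]
      _ = exp 3 := by rw [← exp_nat_mul]; norm_num
  have hlog2 : log 2 < 1 := by linarith [log_two_lt_d9]
  have hL : log (2 * x) / log (log x) ≤ (1 + log x) / 3 := by
    rw [div_le_div_iff₀ (by linarith) (by norm_num), log_mul two_ne_zero (by linarith)]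
    nlinarith
  have := Nat.ceil_lt_add_one (div_nonneg (log_nonneg (by linarith : (1 : ℝ) ≤ 2 * x))
    (by linarith : (0 : ℝ) ≤ log (log x)))
  linarith

/-- For all sufficiently large `n`, every unit vector `v ∈ ℝⁿ` admits a scale
`α₀` from the grid `A = {(log n)^{-1/2}, …, (log n)^{-(⌈L⌉-1)/2}, (log n)^{-L/2}}`,
where `L = log(2n)/log log n`, such that
`1/α₀² ≥ #{i : |v i| ≥ α₀} > 1/(α₀² (log n)²)`. -/
theorem exists_alpha_in_grid :
    ∃ N : ℕ, ∀ n : ℕ, N ≤ n → ∀ v : Fin n → ℝ, (∑ i, v i ^ 2 = 1) →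
      ∃ α₀ : ℝ,
        ((∃ ℓ : ℕ, 1 ≤ ℓ ∧
            ℓ ≤ ⌈Real.log (2 * (n : ℝ)) / Real.log (Real.log n)⌉₊ - 1 ∧
            α₀ = Real.log n ^ (-(ℓ : ℝ) / 2)) ∨
          α₀ = Real.log n ^ (-(Real.log (2 * (n : ℝ)) / Real.log (Real.log n)) / 2)) ∧
        ((Finset.univ.filter (fun i => α₀ ≤ |v i|)).card : ℝ) ≤ 1 / α₀ ^ 2 ∧
        1 / (α₀ ^ 2 * Real.log n ^ 2) <
          ((Finset.univ.filter (fun i => α₀ ≤ |v i|)).card : ℝ) := by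
  refine ⟨⌈exp (exp 3)⌉₊, fun n hn v hv => ?_⟩
  have hx : exp (exp 3) ≤ n := Nat.ceil_le.1 hn
  set w := log (n : ℝ)
  set L := log (2 * (n : ℝ)) / log w
  have hw : 1 < w :=
    (one_lt_exp_iff.2 three_pos).trans_le ((le_log_iff_exp_le ((exp_pos _).trans_le hx)).2 hx)
  have hw0 : 0 < w := zero_lt_one.trans hw
  have h2n : 1 < 2 * (n : ℝ) := by linarith [one_le_exp (exp_pos 3).le]
  have hwL : w ^ L = 2 * n := rpow_logb (by linarith) hw.ne' (by linarith)
  have hK : ((⌈L⌉₊ - 1 : ℕ) : ℝ) + 1 = ⌈L⌉₊ := by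
    rw [Nat.cast_sub (Nat.ceil_pos.2 (div_pos (log_pos h2n) (log_pos hw))), Nat.cast_one,
      sub_add_cancel]
  have hsmall : 2 * (Fintype.card (Fin n) : ℝ) * gridScale w L (⌈L⌉₊ - 1) ^ 2 ≤ 1 := by
    rw [sq_gridScale L hw0.le, min_eq_right (hK ▸ Nat.le_ceil L), rpow_neg hw0.le, hwL,
      Fintype.card_fin]
    exact (mul_inv_cancel₀ (by linarith)).le
  obtain ⟨j, -, hj⟩ := exists_lt_card_filter_le_abs v hv (gridScale_pos L hw0)
    (gridScale_antitone L hw.le) hw0 (one_le_mul_sq_gridScale_zero L hw.le)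
    (sq_gridScale_le_mul_sq_gridScale_succ L hw.le) hsmall (hK ▸ two_mul_ceil_lt_log hx)
  have hcheb := card_filter_le_abs_le_sum_sq_div v (gridScale_pos L hw0 j)
  rw [hv] at hcheb
  exact ⟨gridScale w L j, gridScale_mem_grid L j, hcheb, hj⟩
end

section
/- Let ξ be a probability measure on a metric space (V, ρ) such that all closed balls of the same radius have equal measure ψ(r) > 0. If K ⊆ V has ξ(K) ≥ γ > 0, then the (δ/2)-packing number of K satisfies M(K, ρ, δ/2) ≥ γ · N(V, ρ, δ). -/
open MeasureTheory

/-- The `δ`-packing number of `K` under `ρ`. -/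
noncomputable def packingNumber {X : Type*} (ρ : X → X → ℝ) (K : Set X) (δ : ℝ) : ℕ∞ :=
  sSup {m : ℕ∞ | ∃ P : Finset X, ↑P ⊆ K ∧
    (∀ x ∈ P, ∀ y ∈ P, x ≠ y → δ < ρ x y) ∧ m = P.card}

/-- The `δ`-covering number of `K` under `ρ`. -/
noncomputable def coveringNumber {X : Type*} (ρ : X → X → ℝ) (K : Set X) (δ : ℝ) : ℕ∞ :=
  sInf {m : ℕ∞ | ∃ C : Finset X, ↑C ⊆ K ∧
    (∀ x ∈ K, ∃ c ∈ C, ρ x c ≤ δ) ∧ m = C.card}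

/-!
A maximal `δ/2`-separated subset `P` of `K` is a `δ/2`-net of `K`, so the balls of radius `δ/2`
around `P` cover `K` and `γ ≤ |P| ψ(δ/2)`. A maximal `δ`-separated subset `Q` of the whole space
is a `δ`-net of it, and the balls of radius `δ/2` around `Q` are disjoint, so `|Q| ψ(δ/2) ≤ 1`.
Hence `γ N(V, δ) ≤ γ |Q| ≤ |P| ≤ M(K, δ/2)`. Maximal separated sets exist because `ψ > 0` bounds
the size of every separated set.
-/

lemma coveringNumber_toENNReal_le_card {X : Type*} {ρ : X → X → ℝ} {K : Set X} {δ : ℝ}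
    {C : Finset X} (hCK : ↑C ⊆ K) (hC : ∀ x ∈ K, ∃ c ∈ C, ρ x c ≤ δ) :
    (coveringNumber ρ K δ).toENNReal ≤ C.card := by
  have h : coveringNumber ρ K δ ≤ C.card := sInf_le ⟨C, hCK, hC, rfl⟩
  exact_mod_cast ENat.toENNReal_le.2 h

lemma card_le_packingNumber_toENNReal {X : Type*} {ρ : X → X → ℝ} {K : Set X} {δ : ℝ}
    {P : Finset X} (hPK : ↑P ⊆ K) (hP : (P : Set X).Pairwise fun x y => δ < ρ x y) :
    (P.card : ENNReal) ≤ (packingNumber ρ K δ).toENNReal := by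
  have h : (P.card : ℕ∞) ≤ packingNumber ρ K δ := le_sSup ⟨P, hPK, hP, rfl⟩
  exact_mod_cast ENat.toENNReal_le.2 h

namespace Metric

variable {X : Type*} [PseudoMetricSpace X]

lemma exists_separated_finset_forall_exists_dist_le {K : Set X} {ε : ℝ} (hε : 0 ≤ ε) (B : ℕ)
    (hB : ∀ P : Finset X, ↑P ⊆ K → (P : Set X).Pairwise (fun x y => ε < dist x y) →
      P.card ≤ B) :
    ∃ P : Finset X, ↑P ⊆ K ∧ (P : Set X).Pairwise (fun x y => ε < dist x y) ∧
      ∀ x ∈ K, ∃ p ∈ P, dist x p ≤ ε := by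
  classical
  let cards : Set ℕ := {n | ∃ P : Finset X, ↑P ⊆ K ∧
    (P : Set X).Pairwise (fun x y => ε < dist x y) ∧ P.card = n}
  have hbdd : BddAbove cards := ⟨B, fun n ⟨P, hPK, hP, hn⟩ => hn ▸ hB P hPK hP⟩
  obtain ⟨P, hPK, hP, hcard⟩ : sSup cards ∈ cards :=
    Nat.sSup_mem ⟨0, ∅, by simp⟩ hbdd
  refine ⟨P, hPK, hP, fun x hx => ?_⟩
  by_contra! hfar
  have hxP : x ∉ P := fun hxP => (hfar x hxP).not_ge (by simpa using hε)
  have hinsert : P.card + 1 ∈ cards := by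
    refine ⟨insert x P, ?_, ?_, Finset.card_insert_of_notMem hxP⟩
    · simpa [Set.insert_subset_iff] using ⟨hx, hPK⟩
    · rw [Finset.coe_insert]
      exact hP.insert_of_notMem hxP fun p hp => ⟨hfar p hp, dist_comm p x ▸ hfar p hp⟩
  have := le_csSup hbdd hinsert
  omega

variable [MeasurableSpace X]

lemma measure_le_card_mul {ξ : Measure X} {K : Set X} {r : ℝ} {c : ENNReal} {C : Finset X}
    (hC : ∀ x ∈ K, ∃ p ∈ C, dist x p ≤ r) (hball : ∀ x ∈ C, ξ (closedBall x r) ≤ c) :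
    ξ K ≤ C.card * c := by
  have hcover : K ⊆ ⋃ p ∈ C, closedBall p r := fun x hx => by
    obtain ⟨p, hp, hxp⟩ := hC x hx
    exact Set.mem_biUnion hp hxp
  calc ξ K ≤ ξ (⋃ p ∈ C, closedBall p r) := measure_mono hcover
    _ ≤ ∑ p ∈ C, ξ (closedBall p r) := measure_biUnion_finset_le _ _
    _ ≤ ∑ p ∈ C, c := Finset.sum_le_sum hball
    _ = C.card * c := by rw [Finset.sum_const, nsmul_eq_mul]

variable [OpensMeasurableSpace X]

lemma card_mul_le_measure_univ {ξ : Measure X} {δ : ℝ} {c : ENNReal} {P : Finset X}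
    (hP : (P : Set X).Pairwise fun x y => δ < dist x y)
    (hball : ∀ x ∈ P, c ≤ ξ (closedBall x (δ / 2))) :
    P.card * c ≤ ξ Set.univ := by
  have hdisj : (P : Set X).PairwiseDisjoint fun x => closedBall x (δ / 2) :=
    fun x hx y hy hxy => closedBall_disjoint_closedBall (by simpa using hP hx hy hxy)
  calc (P.card : ENNReal) * c
      = ∑ x ∈ P, c := by rw [Finset.sum_const, nsmul_eq_mul]
    _ ≤ ∑ x ∈ P, ξ (closedBall x (δ / 2)) := Finset.sum_le_sum hball
    _ = ξ (⋃ x ∈ P, closedBall x (δ / 2)) :=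
        (measure_biUnion_finset hdisj fun _ _ => measurableSet_closedBall).symm
    _ ≤ ξ Set.univ := measure_mono (Set.subset_univ _)

lemma exists_card_le_of_separated {ξ : Measure X} [IsFiniteMeasure ξ] {δ : ℝ} {c : ENNReal}
    (hc : c ≠ 0) (hball : ∀ x, c ≤ ξ (closedBall x (δ / 2))) :
    ∃ B : ℕ, ∀ P : Finset X, (P : Set X).Pairwise (fun x y => δ < dist x y) → P.card ≤ B := by
  obtain ⟨B, hB⟩ := ENNReal.exists_nat_gt (ENNReal.div_ne_top (measure_ne_top ξ Set.univ) hc)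
  refine ⟨B, fun P hP => ?_⟩
  have hcard : (P.card : ENNReal) ≤ ξ Set.univ / c :=
    ENNReal.le_div_iff_mul_le (.inl hc) (.inr (measure_ne_top ξ _)) |>.2
      (card_mul_le_measure_univ hP fun x _ => hball x)
  exact_mod_cast hcard.trans hB.le

end Metric

theorem packing_ge_measure_mul_covering_general {X : Type*} [MetricSpace X] [MeasurableSpace X]
    [BorelSpace X] (ξ : Measure X) [IsProbabilityMeasure ξ]
    (ψ : ℝ → ENNReal)
    (hψ : ∀ (x : X) (rr : ℝ), 0 < rr → ξ (Metric.closedBall x rr) = ψ rr)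
    (hψpos : ∀ rr : ℝ, 0 < rr → 0 < ψ rr)
    (K : Set X) (γ : ENNReal) (hK : γ ≤ ξ K)
    (δ : ℝ) (hδ : 0 < δ) :
    γ * (coveringNumber (fun x y => dist x y) (Set.univ : Set X) δ).toENNReal ≤
      (packingNumber (fun x y => dist x y) K (δ / 2)).toENNReal := by
  have hδ2 : 0 < δ / 2 := by positivity
  obtain ⟨B, hB⟩ := Metric.exists_card_le_of_separated (δ := δ / 2) (hψpos _ (by positivity)).ne'
    fun x => (hψ x _ (by positivity)).ge
  obtain ⟨P, hPK, hP, hPnet⟩ :=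
    Metric.exists_separated_finset_forall_exists_dist_le (K := K) hδ2.le B fun P _ => hB P
  obtain ⟨B', hB'⟩ := Metric.exists_card_le_of_separated (δ := δ) (hψpos _ hδ2).ne'
    fun x => (hψ x _ hδ2).ge
  obtain ⟨Q, -, hQ, hQnet⟩ :=
    Metric.exists_separated_finset_forall_exists_dist_le (K := Set.univ) hδ.le B' fun Q _ => hB' Q
  have hγP : γ ≤ P.card * ψ (δ / 2) :=
    hK.trans (Metric.measure_le_card_mul hPnet fun x _ => (hψ x _ hδ2).le)
  have hQ1 : Q.card * ψ (δ / 2) ≤ 1 :=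
    (Metric.card_mul_le_measure_univ hQ fun x _ => (hψ x _ hδ2).ge).trans_eq measure_univ
  calc γ * (coveringNumber (fun x y => dist x y) (Set.univ : Set X) δ).toENNReal
      ≤ P.card * ψ (δ / 2) * Q.card :=
        mul_le_mul' hγP (coveringNumber_toENNReal_le_card (Set.subset_univ _)
          fun x _ => hQnet x trivial)
    _ = P.card * (Q.card * ψ (δ / 2)) := by ring
    _ ≤ P.card := mul_le_of_le_one_right' hQ1
    _ ≤ (packingNumber (fun x y => dist x y) K (δ / 2)).toENNReal :=
        card_le_packingNumber_toENNReal hPK hP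

/-- If a probability measure `ξ` on a metric space assigns the same positive measure
`ψ(r)` to every closed ball of radius `r`, and `K` has `ξ(K) ≥ γ > 0`, then
`M(K, dist, δ/2) ≥ γ · N(V, dist, δ)` where `V` is the whole space. -/
theorem packing_ge_measure_mul_covering {X : Type*} [MetricSpace X] [MeasurableSpace X]
    [BorelSpace X] (ξ : Measure X) [IsProbabilityMeasure ξ]
    (ψ : ℝ → ENNReal)
    (hψ : ∀ (x : X) (rr : ℝ), 0 < rr → ξ (Metric.closedBall x rr) = ψ rr)
    (hψpos : ∀ rr : ℝ, 0 < rr → 0 < ψ rr)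
    (K : Set X) (γ : ENNReal) (hγ : 0 < γ) (hK : γ ≤ ξ K)
    (δ : ℝ) (hδ : 0 < δ) :
    γ * (coveringNumber (fun x y => dist x y) (Set.univ : Set X) δ).toENNReal ≤
      (packingNumber (fun x y => dist x y) K (δ / 2)).toENNReal :=
  packing_ge_measure_mul_covering_general ξ ψ hψ hψpos K γ hK δ hδ
end

section
/- Let h ∈ R^n with h ≥ 0 entrywise, ‖h‖₂² = r, and ‖h‖_∞ ≤ 1, and let s be a positive integer. Then there exists v ∈ R^n with v ≥ 0 such that s·v_i² is a nonnegative integer for every i, Σ_i v_i² = r, max_i s·v_i² ≤ s+1, and ‖h - v‖_∞ ≤ 1/√s. -/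
/-!
Round the scaled squares `s * h i ^ 2` to integers `m i` by taking successive differences of
the floors of their partial sums. Every partial sum of the `m i` is then the floor of the
corresponding partial sum of the `s * h i ^ 2`, so each `m i` is within `1` of `s * h i ^ 2`,
and the total is exactly `s * r` because that total is already an integer. Setting
`v i = √(m i / s)`, the bound `|h i - v i| ≤ 1 / √s` follows from `|√a - √b| ≤ √|a - b|`.
-/

open Finset

namespace Real

theorem sqrt_add_le_add_sqrt {x y : ℝ} (hx : 0 ≤ x) (hy : 0 ≤ y) : √(x + y) ≤ √x + √y :=
  Real.sqrt_le_iff.mpr ⟨by positivity, by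
    nlinarith [Real.sq_sqrt hx, Real.sq_sqrt hy, Real.sqrt_nonneg x, Real.sqrt_nonneg y]⟩

theorem abs_sqrt_sub_sqrt_le {a b : ℝ} (ha : 0 ≤ a) (hb : 0 ≤ b) : |√a - √b| ≤ √|a - b| := by
  have key {x y : ℝ} (hy : 0 ≤ y) : √x ≤ √y + √|x - y| :=
    calc √x ≤ √(y + |x - y|) := Real.sqrt_le_sqrt (by linarith [le_abs_self (x - y)])
      _ ≤ √y + √|x - y| := sqrt_add_le_add_sqrt hy (abs_nonneg _)
  rw [abs_sub_le_iff]
  constructor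
  · linarith [key (x := a) hb]
  · rw [abs_sub_comm]
    linarith [key (x := b) ha]

theorem abs_sub_sqrt_div_le_one_div_sqrt {a k t : ℝ} (ha : 0 ≤ a) (hk : 0 ≤ k) (ht : 0 < t)
    (h : |t * a ^ 2 - k| ≤ 1) : |a - √(k / t)| ≤ 1 / √t := by
  have hdist : |a ^ 2 - k / t| ≤ 1 / t := by
    rw [show a ^ 2 - k / t = (t * a ^ 2 - k) / t by field_simp, abs_div, abs_of_pos ht]
    gcongr
  calc |a - √(k / t)| = |√(a ^ 2) - √(k / t)| := by rw [Real.sqrt_sq ha]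
    _ ≤ √|a ^ 2 - k / t| := abs_sqrt_sub_sqrt_le (by positivity) (by positivity)
    _ ≤ √(1 / t) := Real.sqrt_le_sqrt hdist
    _ = 1 / √t := by rw [one_div, Real.sqrt_inv, one_div]

end Real

noncomputable def cumulativeFloorRounding (x : ℕ → ℝ) (i : ℕ) : ℕ :=
  ⌊∑ j ∈ range (i + 1), x j⌋₊ - ⌊∑ j ∈ range i, x j⌋₊

section CumulativeFloorRounding

variable {x : ℕ → ℝ} (hx : ∀ j, 0 ≤ x j)
include hx

theorem monotone_floor_partialSum : Monotone fun i ↦ ⌊∑ j ∈ range i, x j⌋₊ :=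
  fun _ _ hab ↦ Nat.floor_mono <|
    sum_le_sum_of_subset_of_nonneg (range_subset_range.2 hab) fun j _ _ ↦ hx j

theorem sum_range_cumulativeFloorRounding (n : ℕ) :
    ∑ i ∈ range n, cumulativeFloorRounding x i = ⌊∑ j ∈ range n, x j⌋₊ := by
  simp [cumulativeFloorRounding, sum_range_tsub (monotone_floor_partialSum hx)]

theorem abs_cumulativeFloorRounding_sub_lt_one (i : ℕ) :
    |(cumulativeFloorRounding x i : ℝ) - x i| < 1 := by
  set S := ∑ j ∈ range i, x j
  have hS : 0 ≤ S := sum_nonneg fun j _ ↦ hx j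
  have hSx : 0 ≤ S + x i := add_nonneg hS (hx i)
  have hfloor : ⌊S⌋₊ ≤ ⌊S + x i⌋₊ := Nat.floor_mono (le_add_of_nonneg_right (hx i))
  rw [cumulativeFloorRounding, sum_range_succ, Nat.cast_sub hfloor, abs_lt]
  constructor <;>
    linarith [Nat.floor_le hS, Nat.lt_floor_add_one S, Nat.floor_le hSx,
      Nat.lt_floor_add_one (S + x i)]

end CumulativeFloorRounding

theorem exists_nat_sum_eq_abs_sub_lt_one {n N : ℕ} (x : Fin n → ℝ) (hx : ∀ i, 0 ≤ x i)
    (hsum : ∑ i, x i = N) :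
    ∃ m : Fin n → ℕ, ∑ i, m i = N ∧ ∀ i, |(m i : ℝ) - x i| < 1 := by
  let y : ℕ → ℝ := fun j ↦ if hj : j < n then x ⟨j, hj⟩ else 0
  have hy : ∀ j, 0 ≤ y j := fun j ↦ by
    by_cases hj : j < n <;> simp [y, hj, hx]
  have hyx : ∀ i : Fin n, y i = x i := fun i ↦ by simp [y]
  refine ⟨fun i ↦ cumulativeFloorRounding y i, ?_, fun i ↦ ?_⟩
  · rw [Fin.sum_univ_eq_sum_range (cumulativeFloorRounding y),
      sum_range_cumulativeFloorRounding hy, ← Fin.sum_univ_eq_sum_range y]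
    simp [hyx, hsum]
  · simpa [hyx] using abs_cumulativeFloorRounding_sub_lt_one hy i

theorem exists_rounding_general (n r s : ℕ) (hs : 0 < s)
    (h : Fin n → ℝ) (hpos : ∀ i, 0 ≤ h i) (hnorm : ∑ i, h i ^ 2 = r)
    (hbound : ∀ i, h i ≤ 1) :
    ∃ v : Fin n → ℝ, (∀ i, 0 ≤ v i) ∧
      (∀ i, ∃ m : ℕ, (s : ℝ) * v i ^ 2 = m) ∧
      (∑ i, v i ^ 2 = r) ∧
      (∀ i, (s : ℝ) * v i ^ 2 ≤ s + 1) ∧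
      (∀ i, |h i - v i| ≤ 1 / Real.sqrt s) := by
  have hs' : (0 : ℝ) < s := by exact_mod_cast hs
  obtain ⟨m, hmsum, hm⟩ := exists_nat_sum_eq_abs_sub_lt_one (N := s * r) (fun i ↦ s * h i ^ 2)
    (fun i ↦ by positivity) (by rw [← mul_sum, hnorm, Nat.cast_mul])
  have hv : ∀ i, (s : ℝ) * √(m i / s) ^ 2 = m i := fun i ↦ by
    rw [Real.sq_sqrt (by positivity), mul_div_cancel₀ _ hs'.ne']
  refine ⟨fun i ↦ √(m i / s), fun i ↦ Real.sqrt_nonneg _, fun i ↦ ⟨m i, hv i⟩, ?_,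
    fun i ↦ ?_, fun i ↦ ?_⟩
  · simp_rw [Real.sq_sqrt (div_nonneg (Nat.cast_nonneg _) hs'.le), ← sum_div]
    rw [← Nat.cast_sum, hmsum, Nat.cast_mul]
    field_simp
  · have : h i ^ 2 ≤ 1 := pow_le_one₀ (hpos i) (hbound i)
    rw [hv]
    nlinarith [(abs_lt.1 (hm i)).2]
  · exact Real.abs_sub_sqrt_div_le_one_div_sqrt (hpos i) (Nat.cast_nonneg _) hs'
      (by rw [abs_sub_comm]; exact (hm i).le)

/-- Rounding lemma: for `h ≥ 0` with `‖h‖₂² = r`, `‖h‖_∞ ≤ 1` and a positive integer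
`s`, there exists `v ≥ 0` with `s·v_i²` a nonnegative integer for each `i`,
`∑ v_i² = r`, `max_i s·v_i² ≤ s+1`, and `‖h - v‖_∞ ≤ 1/√s`. -/
theorem exists_rounding (n r s : ℕ) (hr : 0 < r) (hs : 0 < s) (hrn : r ≤ n)
    (h : Fin n → ℝ) (hpos : ∀ i, 0 ≤ h i) (hnorm : ∑ i, h i ^ 2 = r)
    (hbound : ∀ i, h i ≤ 1) :
    ∃ v : Fin n → ℝ, (∀ i, 0 ≤ v i) ∧
      (∀ i, ∃ m : ℕ, (s : ℝ) * v i ^ 2 = m) ∧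
      (∑ i, v i ^ 2 = r) ∧
      (∀ i, (s : ℝ) * v i ^ 2 ≤ s + 1) ∧
      (∀ i, |h i - v i| ≤ 1 / Real.sqrt s) :=
  exists_rounding_general n r s hs h hpos hnorm hbound
end
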